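/- arXiv:1802.00518 — 2 statements merged into one kernel-verified Lean document; each statement's English description precedes it below -/
import Mathlib

section
/- Let P ∈ ℝ^{n×N}, let W* ∈ ℝ^{n×n} be unitary with Z* := W*P having at most s nonzero entries in each column, and let W ∈ ℝ^{n×n} satisfy ‖W − W*‖_F < (1/2) min_j β(Z*_{(·,j)} / ‖Z*_{(·,j)}‖₂). Define Z ∈ ℝ^{n×N} column-wise by Z_{(·,j)} = H_s(W P_{(·,j)}). Then ‖Z − Z*‖_F ≤ ‖W − W*‖_F · ‖P‖₂, where ‖·‖₂ is the spectral norm. Moreover, for each column j, the support of Z_{(·,j)} contains the support of Z*_{(·,j)} and Z_{(·,j)} = Z*_{(·,j)} + Γ_j (W − W*) P_{(·,j)}, where Γ_j is the diagonal 0/1 matrix whose ones are at the indices of the support of Z_{(·,j)}. -/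
open scoped BigOperators
open Matrix

/-- Frobenius norm of a real matrix. -/
noncomputable def frobNorm {m n : ℕ} (A : Matrix (Fin m) (Fin n) ℝ) : ℝ :=
  Real.sqrt (∑ i, ∑ j, (A i j) ^ 2)

/-- Spectral (largest singular value / ℓ2-operator) norm of a real matrix. -/
noncomputable def specNorm {m n : ℕ} (A : Matrix (Fin m) (Fin n) ℝ) : ℝ :=
  ‖LinearMap.toContinuousLinearMap (Matrix.toEuclideanLin A)‖

/-- Euclidean (ℓ2) norm of a vector. -/
noncomputable def vecNorm {n : ℕ} (v : Fin n → ℝ) : ℝ :=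
  Real.sqrt (∑ i, v i ^ 2)

/-- β(z): the smallest nonzero magnitude among the entries of `z`
(defined as `sInf` of the set of nonzero magnitudes; `0` if `z = 0`). -/
noncomputable def beta {n : ℕ} (z : Fin n → ℝ) : ℝ :=
  sInf {r : ℝ | ∃ i, z i ≠ 0 ∧ r = |z i|}

/-- `z` is an output of the hard-thresholding operator `H_s` applied to `y`:
there is a set `T` of `min s n` indices carrying largest-magnitude entries of `y`,
such that `z` agrees with `y` on `T` and vanishes off `T`. -/
def IsHardThreshold {n : ℕ} (s : ℕ) (y z : Fin n → ℝ) : Prop :=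
  ∃ T : Finset (Fin n), T.card = min s n ∧ (∀ i ∈ T, z i = y i) ∧ (∀ i ∉ T, z i = 0) ∧
    ∀ i ∈ T, ∀ j ∉ T, |y j| ≤ |y i|

/-- `A = U * S * Vᵀ` is a full singular value decomposition of `A`:
`U, V` orthogonal and `S` diagonal with nonnegative entries. -/
def IsFullSVD {n : ℕ} (A U S V : Matrix (Fin n) (Fin n) ℝ) : Prop :=
  Uᵀ * U = 1 ∧ Vᵀ * V = 1 ∧ (∀ i j, i ≠ j → S i j = 0) ∧ (∀ i, 0 ≤ S i i) ∧ A = U * S * Vᵀ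

/-- `W = V * Uᵀ` for some full SVD `A = U * S * Vᵀ`. -/
def IsPolarFromSVD {n : ℕ} (A W : Matrix (Fin n) (Fin n) ℝ) : Prop :=
  ∃ U S V, IsFullSVD A U S V ∧ W = V * Uᵀ

/-- `D_k`: the n×n diagonal matrix of ones with a zero at entry (k,k). -/
noncomputable def Dmat {n : ℕ} (k : Fin n) : Matrix (Fin n) (Fin n) ℝ :=
  Matrix.diagonal (fun i => if i = k then 0 else 1)

-- `D̃_k`: the N×N diagonal matrix with ones at the support of the k-th row of `Zs`.
open Classical in
noncomputable def Dtil {n N : ℕ} (Zs : Matrix (Fin n) (Fin N) ℝ) (k : Fin n) :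
    Matrix (Fin N) (Fin N) ℝ :=
  Matrix.diagonal (fun i => if Zs k i ≠ 0 then 1 else 0)

/-- `q = max_{1 ≤ k ≤ n} ‖D_k Z* D̃_k‖₂`. -/
noncomputable def qZero {n N : ℕ} (Zs : Matrix (Fin n) (Fin N) ℝ) : ℝ :=
  ⨆ k, specNorm (Dmat k * Zs * Dtil Zs k)

/-- Smallest singular value of an n×N matrix: `min_{‖x‖=1, x ∈ ℝⁿ} ‖Aᵀ x‖`. -/
noncomputable def sigmaMin {n N : ℕ} (A : Matrix (Fin n) (Fin N) ℝ) : ℝ :=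
  sInf {r : ℝ | ∃ x : EuclideanSpace ℝ (Fin n), ‖x‖ = 1 ∧ r = ‖Matrix.toEuclideanLin Aᵀ x‖}

/-- Condition number κ(A): ratio of largest to smallest singular value. -/
noncomputable def condNumber {n N : ℕ} (A : Matrix (Fin n) (Fin N) ℝ) : ℝ :=
  specNorm A / sigmaMin A

/-- `q = κ⁴(Z*) · max_{1 ≤ k ≤ n} ‖D_k Z* Z*ᵀ Z* D̃_k‖₂`. -/
noncomputable def qGen {n N : ℕ} (Zs : Matrix (Fin n) (Fin N) ℝ) : ℝ :=
  condNumber Zs ^ 4 * ⨆ k, specNorm (Dmat k * Zs * Zsᵀ * Zs * Dtil Zs k)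

-- ===== auxiliary lemmas =====

open scoped Matrix.Norms.L2Operator

lemma specNorm_eq_l2 {m n : ℕ} (A : Matrix (Fin m) (Fin n) ℝ) : specNorm A = ‖A‖ := rfl

lemma specNorm_nonneg {m n : ℕ} (A : Matrix (Fin m) (Fin n) ℝ) : 0 ≤ specNorm A :=
  norm_nonneg _

lemma vecNorm_eq {n : ℕ} (v : Fin n → ℝ) :
    vecNorm v = ‖(EuclideanSpace.equiv (Fin n) ℝ).symm v‖ := by
  rw [EuclideanSpace.norm_eq]
  simp [vecNorm, sq_abs]

lemma specNorm_transpose {m n : ℕ} (A : Matrix (Fin m) (Fin n) ℝ) :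
    specNorm Aᵀ = specNorm A := by
  have h : Aᴴ = Aᵀ := by ext i j; simp [Matrix.conjTranspose_apply]
  rw [specNorm_eq_l2, specNorm_eq_l2, ← h, Matrix.l2_opNorm_conjTranspose]

lemma mulVec_spec_bound {m n : ℕ} (A : Matrix (Fin m) (Fin n) ℝ) (x : Fin n → ℝ) :
    vecNorm (A.mulVec x) ≤ specNorm A * vecNorm x := by
  rw [vecNorm_eq, vecNorm_eq, specNorm_eq_l2]
  exact A.l2_opNorm_mulVec ((EuclideanSpace.equiv (Fin n) ℝ).symm x)

lemma sq_mulVec_le_frob {m n : ℕ} (A : Matrix (Fin m) (Fin n) ℝ) (x : Fin n → ℝ) :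
    ∑ i, (A.mulVec x i) ^ 2 ≤ (∑ i, ∑ j, (A i j) ^ 2) * (∑ j, (x j) ^ 2) := by
  rw [Finset.sum_mul]
  refine Finset.sum_le_sum fun i _ => ?_
  simpa [Matrix.mulVec, dotProduct] using
    Finset.sum_mul_sq_le_sq_mul_sq Finset.univ (fun j => A i j) x

lemma mulVec_frob_bound {m n : ℕ} (A : Matrix (Fin m) (Fin n) ℝ) (x : Fin n → ℝ) :
    vecNorm (A.mulVec x) ≤ frobNorm A * vecNorm x := by
  rw [vecNorm, frobNorm, vecNorm, ← Real.sqrt_mul (by positivity)]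
  exact Real.sqrt_le_sqrt (sq_mulVec_le_frob A x)

lemma sq_mulVec_le_spec {m n : ℕ} (A : Matrix (Fin m) (Fin n) ℝ) (x : Fin n → ℝ) :
    ∑ i, (A.mulVec x i) ^ 2 ≤ specNorm A ^ 2 * ∑ j, (x j) ^ 2 := by
  have h := mulVec_spec_bound A x
  have h1 : 0 ≤ vecNorm (A.mulVec x) := Real.sqrt_nonneg _
  have h2 := pow_le_pow_left₀ h1 h 2
  rw [mul_pow, vecNorm, vecNorm, Real.sq_sqrt (by positivity), Real.sq_sqrt (by positivity)] at h2
  exact h2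

lemma unitary_sq {n : ℕ} {Ws : Matrix (Fin n) (Fin n) ℝ} (h : Wsᵀ * Ws = 1)
    (x : Fin n → ℝ) : ∑ i, (Ws.mulVec x i) ^ 2 = ∑ i, (x i) ^ 2 := by
  have h1 : ∀ v : Fin n → ℝ, ∑ i, v i ^ 2 = v ⬝ᵥ v := by
    intro v; simp [dotProduct, pow_two]
  rw [h1, h1, Matrix.dotProduct_mulVec]
  have h2 : (Ws *ᵥ x) ᵥ* Ws = x := by
    rw [← Matrix.mulVec_transpose, Matrix.mulVec_mulVec, h, Matrix.one_mulVec]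
  rw [h2]

lemma beta_le {n : ℕ} (z : Fin n → ℝ) (i : Fin n) (h : z i ≠ 0) : beta z ≤ |z i| := by
  refine csInf_le ⟨0, ?_⟩ ⟨i, h, rfl⟩
  rintro r ⟨k, -, rfl⟩
  exact abs_nonneg _

lemma abs_le_vecNorm {n : ℕ} (v : Fin n → ℝ) (i : Fin n) : |v i| ≤ vecNorm v := by
  rw [vecNorm, ← Real.sqrt_sq_eq_abs]
  exact Real.sqrt_le_sqrt (Finset.single_le_sum (fun k _ => sq_nonneg (v k)) (Finset.mem_univ i))

lemma abs_tri (a b : ℝ) : |a| ≤ |a + b| + |b| := by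
  calc |a| = |(a + b) + (-b)| := by congr 1; ring
    _ ≤ |a + b| + |(-b)| := abs_add_le _ _
    _ = |a + b| + |b| := by rw [abs_neg]

lemma column_step {n : ℕ} (s : ℕ) (zs e z : Fin n → ℝ)
    (hcard : {i | zs i ≠ 0}.ncard ≤ s)
    (hbnd : ∀ i, zs i ≠ 0 → ∀ k, |e k| < (1/2) * |zs i|)
    (hHT : IsHardThreshold s (fun i => zs i + e i) z) :
    (∀ i, zs i ≠ 0 → z i ≠ 0) ∧ ∀ i, z i = zs i + (if z i ≠ 0 then e i else 0) := by
  classical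
  obtain ⟨T, hTcard, hTeq, hTzero, hTmax⟩ := hHT
  set S : Finset (Fin n) := Finset.univ.filter (fun i => zs i ≠ 0) with hS
  have hSncard : {i | zs i ≠ 0}.ncard = S.card := by
    rw [← Set.ncard_coe_finset]
    congr 1
    ext i; simp [hS]
  have hScard : S.card ≤ min s n := by
    refine le_min (by rw [← hSncard]; exact hcard) ?_
    simpa using Finset.card_le_univ S
  have hsubT : ∀ i, zs i ≠ 0 → i ∈ T := by
    intro i hi
    by_contra hiT
    have hiS : i ∈ S := by simp [hS, hi]
    have hTS : (T \ S).Nonempty := by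
      rw [Finset.sdiff_nonempty]
      intro hTsub
      have h1 : T ⊆ S.erase i := fun t ht => Finset.mem_erase.2 ⟨fun hh => hiT (hh ▸ ht), hTsub ht⟩
      have h2 := Finset.card_le_card h1
      rw [Finset.card_erase_of_mem hiS, hTcard] at h2
      have h3 : 1 ≤ S.card := Finset.card_pos.2 ⟨i, hiS⟩
      omega
    obtain ⟨i', hi'⟩ := hTS
    rw [Finset.mem_sdiff] at hi'
    have hzi' : zs i' = 0 := by
      by_contra hne; exact hi'.2 (by simp [hS, hne])
    have hle := hTmax i' hi'.1 i hiT
    simp only at hle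
    rw [hzi', zero_add] at hle
    have h1 := hbnd i hi i
    have h2 := hbnd i hi i'
    have h3 := abs_tri (zs i) (e i)
    linarith
  have hzne : ∀ i, zs i ≠ 0 → z i ≠ 0 := by
    intro i hi
    have hEq := hTeq i (hsubT i hi)
    simp only at hEq
    rw [hEq]
    intro h0
    have h1 := hbnd i hi i
    have h3 := abs_tri (zs i) (e i)
    rw [h0, abs_zero] at h3
    have h4 := abs_pos.2 hi
    linarith
  refine ⟨hzne, fun i => ?_⟩
  by_cases h0 : z i = 0
  · have hz0 : zs i = 0 := by
      by_contra hne
      exact (hzne i hne) h0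
    simp [h0, hz0]
  · have hiT : i ∈ T := by
      by_contra hiT
      exact h0 (hTzero i hiT)
    rw [if_pos h0]
    exact hTeq i hiT


/-- error bound for one sparse coding step. -/
theorem stmt4
    {n N : ℕ} (s : ℕ)
    (P : Matrix (Fin n) (Fin N) ℝ) (Ws W : Matrix (Fin n) (Fin n) ℝ)
    (Zs Z : Matrix (Fin n) (Fin N) ℝ)
    (hWs : Wsᵀ * Ws = 1)
    (hZs : Zs = Ws * P)
    (hsparse : ∀ j, {i | Zs i j ≠ 0}.ncard ≤ s)
    (hW : ∀ j, frobNorm (W - Ws) < (1/2) * beta (fun i => Zs i j / vecNorm (fun i => Zs i j)))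
    (hZ : ∀ j, IsHardThreshold s (W.mulVec (fun i => P i j)) (fun i => Z i j)) :
    frobNorm (Z - Zs) ≤ frobNorm (W - Ws) * specNorm P ∧
    ∀ j, ({i | Zs i j ≠ 0} ⊆ {i | Z i j ≠ 0}) ∧
      (∀ i, Z i j = Zs i j +
        (if Z i j ≠ 0 then ((W - Ws).mulVec (fun k => P k j)) i else 0)) := by
  classical
  have key : ∀ j, (∀ i, Zs i j ≠ 0 → Z i j ≠ 0) ∧
      (∀ i, Z i j = Zs i j +
        (if Z i j ≠ 0 then ((W - Ws).mulVec (fun k => P k j)) i else 0)) := by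
    intro j
    have hzs : ∀ i, Zs i j = Ws.mulVec (fun k => P k j) i := by
      intro i; rw [hZs]; simp [Matrix.mul_apply, Matrix.mulVec, dotProduct]
    have hnorm : vecNorm (fun k => P k j) = vecNorm (fun i => Zs i j) := by
      have : (fun i => Zs i j) = Ws.mulVec (fun k => P k j) := funext hzs
      rw [this, vecNorm, vecNorm, unitary_sq hWs]
    have hbnd : ∀ i, Zs i j ≠ 0 →
        ∀ k, |((W - Ws).mulVec (fun k => P k j)) k| < (1/2) * |Zs i j| := by
      intro i hi k
      have hc : 0 < vecNorm (fun i => Zs i j) := by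
        rw [vecNorm]
        refine Real.sqrt_pos.2 (lt_of_lt_of_le ?_
          (Finset.single_le_sum (fun k _ => sq_nonneg (Zs k j)) (Finset.mem_univ i)))
        exact lt_of_le_of_ne (sq_nonneg _) (Ne.symm (pow_ne_zero 2 hi))
      have hb : beta (fun i => Zs i j / vecNorm (fun i => Zs i j))
          ≤ |Zs i j| / vecNorm (fun i => Zs i j) := by
        have hne : Zs i j / vecNorm (fun i => Zs i j) ≠ 0 := div_ne_zero hi hc.ne'
        have h := beta_le (fun i => Zs i j / vecNorm (fun i => Zs i j)) i hne
        rwa [abs_div, abs_of_pos hc] at h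
      have h1 : |((W - Ws).mulVec (fun k => P k j)) k|
          ≤ frobNorm (W - Ws) * vecNorm (fun k => P k j) :=
        (abs_le_vecNorm _ k).trans (mulVec_frob_bound _ _)
      rw [hnorm] at h1
      have h2 : frobNorm (W - Ws) * vecNorm (fun i => Zs i j)
          < ((1/2) * beta (fun i => Zs i j / vecNorm (fun i => Zs i j)))
              * vecNorm (fun i => Zs i j) :=
        mul_lt_mul_of_pos_right (hW j) hc
      have h4 : beta (fun i => Zs i j / vecNorm (fun i => Zs i j))
          * vecNorm (fun i => Zs i j) ≤ |Zs i j| := by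
        have h5 := mul_le_mul_of_nonneg_right hb hc.le
        rwa [div_mul_cancel₀ _ hc.ne'] at h5
      nlinarith
    have hy : W.mulVec (fun k => P k j)
        = fun i => Zs i j + ((W - Ws).mulVec (fun k => P k j)) i := by
      funext i
      rw [Matrix.sub_mulVec]
      simp only [Pi.sub_apply]
      rw [hzs i]
      ring
    have hHT := hZ j
    rw [hy] at hHT
    exact column_step s (fun i => Zs i j) ((W - Ws).mulVec (fun k => P k j))
      (fun i => Z i j) (hsparse j) hbnd hHT
  refine ⟨?_, fun j => ⟨fun i hi => (key j).1 i hi, (key j).2⟩⟩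
  -- Frobenius bound
  have hsq : ∀ i j, ((Z - Zs) i j) ^ 2 ≤ (((W - Ws) * P) i j) ^ 2 := by
    intro i j
    have hid := (key j).2 i
    have hmp : ((W - Ws).mulVec (fun k => P k j)) i = ((W - Ws) * P) i j := by
      simp [Matrix.mul_apply, Matrix.mulVec, dotProduct]
    have h1 : (Z - Zs) i j
        = (if Z i j ≠ 0 then ((W - Ws).mulVec (fun k => P k j)) i else 0) := by
      rw [Matrix.sub_apply]
      nth_rewrite 1 [hid]
      ring
    rw [hmp] at h1
    rw [h1]
    split
    · exact le_refl _
    · simpa using sq_nonneg (((W - Ws) * P) i j)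
  have hEP : ∑ i, ∑ j, (((W - Ws) * P) i j) ^ 2
      ≤ frobNorm (W - Ws) ^ 2 * specNorm P ^ 2 := by
    have h1 : ∀ i, ∑ j, (((W - Ws) * P) i j) ^ 2
        = ∑ j, ((Pᵀ.mulVec (fun k => (W - Ws) i k)) j) ^ 2 := by
      intro i
      refine Finset.sum_congr rfl fun jj _ => ?_
      congr 1
      simp [Matrix.mul_apply, Matrix.mulVec, dotProduct, Matrix.transpose_apply,
        mul_comm]
    calc ∑ i, ∑ j, (((W - Ws) * P) i j) ^ 2
        = ∑ i, ∑ j, ((Pᵀ.mulVec (fun k => (W - Ws) i k)) j) ^ 2 :=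
          Finset.sum_congr rfl fun i _ => h1 i
      _ ≤ ∑ i, specNorm Pᵀ ^ 2 * ∑ k, ((W - Ws) i k) ^ 2 :=
          Finset.sum_le_sum fun i _ => sq_mulVec_le_spec Pᵀ _
      _ = specNorm P ^ 2 * ∑ i, ∑ k, ((W - Ws) i k) ^ 2 := by
          rw [← Finset.mul_sum, specNorm_transpose]
      _ = frobNorm (W - Ws) ^ 2 * specNorm P ^ 2 := by
          rw [frobNorm, Real.sq_sqrt (by positivity)]
          ring
  have hmain : ∑ i, ∑ j, ((Z - Zs) i j) ^ 2
      ≤ (frobNorm (W - Ws) * specNorm P) ^ 2 := by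
    calc ∑ i, ∑ j, ((Z - Zs) i j) ^ 2 ≤ ∑ i, ∑ j, (((W - Ws) * P) i j) ^ 2 :=
          Finset.sum_le_sum fun i _ => Finset.sum_le_sum fun j _ => hsq i j
      _ ≤ frobNorm (W - Ws) ^ 2 * specNorm P ^ 2 := hEP
      _ = (frobNorm (W - Ws) * specNorm P) ^ 2 := by ring
  have hnn : 0 ≤ frobNorm (W - Ws) * specNorm P :=
    mul_nonneg (Real.sqrt_nonneg _) (specNorm_nonneg P)
  calc frobNorm (Z - Zs) = Real.sqrt (∑ i, ∑ j, ((Z - Zs) i j) ^ 2) := rfl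
    _ ≤ Real.sqrt ((frobNorm (W - Ws) * specNorm P) ^ 2) := Real.sqrt_le_sqrt hmain
    _ = frobNorm (W - Ws) * specNorm P := Real.sqrt_sq hnn
end

section
/- There exists a constant C > 0 such that for every n and every X ∈ ℝ^{n×n} with ‖X‖_F ≤ 1/2, the positive-definite square root of (Id + X)(Id + X)ᵀ satisfies ‖((Id + X)(Id + X)ᵀ)^{1/2} − Id − (1/2)(X + Xᵀ)‖_F ≤ C ‖X‖_F². -/
/-!
Put `H = ½ (X + Xᵀ)` and `T = S - (1 + H)`. Since `S² = (1 + X)(1 + X)ᵀ`, `T` solves the Sylvester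
equation `S T + T (1 + H) = X Xᵀ - H²`, whose right side has Frobenius norm at most `2 ‖X‖²`.
Pairing the equation with `T` in the trace inner product, `S ⪰ 0` and `1 + H ⪰ (1 - ‖X‖) • 1 ⪰ ½ • 1`
(because `|xᵀ X x| ≤ ‖X‖_F |x|²`) give `½ ‖T‖² ≤ tr (Tᵀ (X Xᵀ - H²)) ≤ ‖T‖ · 2 ‖X‖²`.
-/

open scoped BigOperators
open Matrix

open WithLp
open scoped Matrix.Norms.Frobenius

namespace Matrix

variable {m n : Type*} [Fintype m] [Fintype n]

theorem trace_transpose_mul_eq_inner (A B : Matrix m n ℝ) :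
    (Aᵀ * B).trace = inner ℝ (toLp 2 fun i => toLp 2 (A i) : PiLp 2 fun _ : m => EuclideanSpace ℝ n)
      (toLp 2 fun i => toLp 2 (B i)) := by
  simp only [trace, diag, mul_apply, transpose_apply, PiLp.inner_apply, Real.inner_apply]
  exact Finset.sum_comm

theorem trace_transpose_mul_le_frobenius_norm_mul (A B : Matrix m n ℝ) :
    (Aᵀ * B).trace ≤ ‖A‖ * ‖B‖ :=
  trace_transpose_mul_eq_inner A B ▸ real_inner_le_norm _ _

theorem frobenius_norm_sq_eq_trace (A : Matrix m n ℝ) : ‖A‖ ^ 2 = (Aᵀ * A).trace :=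
  (trace_transpose_mul_eq_inner A A ▸ real_inner_self_eq_norm_sq _).symm

theorem dotProduct_mulVec_le_frobenius_norm_mul (A : Matrix n n ℝ) (x : n → ℝ) :
    x ⬝ᵥ (A *ᵥ x) ≤ ‖A‖ * (x ⬝ᵥ x) := by
  set C := replicateCol Unit x
  have hquad : x ⬝ᵥ (A *ᵥ x) = (Cᵀ * (A * C)).trace := by
    simp [C, trace, mul_apply, dotProduct, mulVec, Finset.mul_sum]
  have hC : ‖C‖ ^ 2 = x ⬝ᵥ x := by
    rw [frobenius_norm_replicateCol, EuclideanSpace.norm_sq_eq]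
    simp [dotProduct, sq]
  calc x ⬝ᵥ (A *ᵥ x) ≤ ‖C‖ * ‖A * C‖ := hquad ▸ trace_transpose_mul_le_frobenius_norm_mul _ _
    _ ≤ ‖C‖ * (‖A‖ * ‖C‖) := by gcongr; exact frobenius_norm_mul A C
    _ = ‖A‖ * (x ⬝ᵥ x) := by rw [← hC]; ring

theorem frobenius_norm_half_smul_add_transpose_le (A : Matrix n n ℝ) :
    ‖(1 / 2 : ℝ) • (A + Aᵀ)‖ ≤ ‖A‖ := by
  calc ‖(1 / 2 : ℝ) • (A + Aᵀ)‖ ≤ 1 / 2 * (‖A‖ + ‖Aᵀ‖) := by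
        rw [norm_smul, Real.norm_of_nonneg (by norm_num)]; gcongr; exact norm_add_le _ _
    _ = ‖A‖ := by rw [frobenius_norm_transpose]; ring

theorem posSemidef_norm_smul_one_add_half_smul_add_transpose [DecidableEq n] (A : Matrix n n ℝ) :
    (‖A‖ • 1 + (1 / 2 : ℝ) • (A + Aᵀ)).PosSemidef := by
  refine .of_dotProduct_mulVec_nonneg ?_ fun x => ?_
  · simp [IsHermitian, transpose_add, add_comm]
  · have h := dotProduct_mulVec_le_frobenius_norm_mul (-A) x
    rw [norm_neg, neg_mulVec, dotProduct_neg] at h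
    simp only [star_trivial, add_mulVec, smul_mulVec, one_mulVec, dotProduct_add,
      dotProduct_smul, mulVec_transpose, dotProduct_comm x (x ᵥ* A), ← dotProduct_mulVec,
      smul_eq_mul]
    linarith

theorem mul_frobenius_norm_le_norm_mul_add_mul_of_posSemidef [DecidableEq n]
    {S : Matrix m m ℝ} {B : Matrix n n ℝ} {c : ℝ} (hS : S.PosSemidef)
    (hB : (B - c • 1).PosSemidef) (T : Matrix m n ℝ) :
    c * ‖T‖ ≤ ‖S * T + T * B‖ := by
  have hST := (hS.conjTranspose_mul_mul_same T).trace_nonneg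
  have hTB := (hB.mul_mul_conjTranspose_same T).trace_nonneg
  rw [conjTranspose_eq_transpose_of_trivial] at hST hTB
  have key : c * ‖T‖ ^ 2 ≤ ‖T‖ * ‖S * T + T * B‖ :=
    calc c * ‖T‖ ^ 2 ≤ (Tᵀ * S * T).trace + (T * (B - c • 1) * Tᵀ).trace + c * ‖T‖ ^ 2 := by
          linarith
      _ = (Tᵀ * (S * T + T * B)).trace := by
          rw [frobenius_norm_sq_eq_trace, Matrix.mul_sub, Matrix.sub_mul, Matrix.mul_smul,
            Matrix.mul_one, Matrix.smul_mul, trace_sub, trace_smul, trace_mul_comm (T * B),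
            trace_mul_comm T, Matrix.mul_add, trace_add, Matrix.mul_assoc, ← Matrix.mul_assoc Tᵀ T,
            smul_eq_mul]
          ring
      _ ≤ ‖T‖ * ‖S * T + T * B‖ := trace_transpose_mul_le_frobenius_norm_mul _ _
  rcases (norm_nonneg T).eq_or_lt with hT | hT
  · rw [← hT, mul_zero]; exact norm_nonneg _
  · nlinarith

end Matrix

theorem frobNorm_eq_norm {m n : ℕ} (A : Matrix (Fin m) (Fin n) ℝ) : frobNorm A = ‖A‖ := by
  rw [frobNorm, frobenius_norm_def, Real.sqrt_eq_rpow]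
  simp only [Real.norm_eq_abs, Real.rpow_two, sq_abs]

/-- first-order Taylor expansion of the positive-definite square root
`((Id + X)(Id + X)ᵀ)^{1/2} ≈ Id + (1/2)(X + Xᵀ)`, with a uniform constant. -/
theorem stmt9 :
    ∃ C : ℝ, 0 < C ∧ ∀ (n : ℕ) (X : Matrix (Fin n) (Fin n) ℝ),
      frobNorm X ≤ 1/2 →
      ∀ S : Matrix (Fin n) (Fin n) ℝ, S.PosSemidef →
        S * S = (1 + X) * (1 + X)ᵀ →
        frobNorm (S - 1 - (1/2 : ℝ) • (X + Xᵀ)) ≤ C * frobNorm X ^ 2 := by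
  refine ⟨4, by norm_num, fun n X hX S hS hSS => ?_⟩
  simp only [frobNorm_eq_norm] at hX ⊢
  set H : Matrix (Fin n) (Fin n) ℝ := (1 / 2 : ℝ) • (X + Xᵀ) with hHdef
  have hH : ‖H‖ ≤ ‖X‖ := frobenius_norm_half_smul_add_transpose_le X
  have hsylv : S * (S - 1 - H) + (S - 1 - H) * (1 + H) = X * Xᵀ - H * H := by
    have h2H : X + Xᵀ = H + H := by rw [hHdef]; module
    calc _ = S * S - (1 + H) * (1 + H) := by noncomm_ring
      _ = _ := by
        rw [hSS, transpose_add, transpose_one]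
        linear_combination (norm := noncomm_ring) h2H
  have hpos : ((1 + H) - (1 - ‖X‖) • 1).PosSemidef := by
    convert posSemidef_norm_smul_one_add_half_smul_add_transpose X using 1
    module
  have hR : ‖X * Xᵀ - H * H‖ ≤ 2 * ‖X‖ ^ 2 :=
    calc ‖X * Xᵀ - H * H‖ ≤ ‖X‖ * ‖Xᵀ‖ + ‖H‖ * ‖H‖ :=
          (norm_sub_le _ _).trans (add_le_add (frobenius_norm_mul _ _) (frobenius_norm_mul _ _))
      _ ≤ 2 * ‖X‖ ^ 2 := by
          rw [frobenius_norm_transpose]; nlinarith [norm_nonneg H]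
  have hT := Matrix.mul_frobenius_norm_le_norm_mul_add_mul_of_posSemidef hS hpos (S - 1 - H)
  rw [hsylv] at hT
  nlinarith [norm_nonneg (S - 1 - H)]
end
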